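/- With [s]_x = 1-x^s, T̃_s = T̃ [s]_x [s+4]_x/([s+1]_x [s+3]_x), T̃ = (1+x)^2/(1+x^2), g = x(1+x^2)/(1+x)^4, X̃_{s,t} = ([4]_x [s+2]_x [t+2]_x [s+t+4]_x)/([2]_x [s+4]_x [t+4]_x [s+t+2]_x), and Ỹ_{s,t,u} = ([s+4]_x [t+4]_x [u+4]_x)/([3]_x [4]_x [s+2]_x [t+2]_x [u+2]_x [s+t+4]_x [t+u+4]_x [u+s+4]_x) · (x [3]_x [s+1]_x [t+1]_x [u+1]_x [s+t+u+5]_x + [1]_x [s+3]_x [t+3]_x [u+3]_x [s+t+u+3]_x), the identity Ỹ_{s,t,u} = 1 + g^3 T̃_s T̃_t T̃_u X̃_{s+1,t+1} X̃_{s+1,u+1} X̃_{t+1,u+1} T̃_{s+1} T̃_{t+1} T̃_{u+1} Ỹ_{s+1,t+1,u+1} holds as an identity of rational functions in x, for all natural numbers s, t, u. -/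
import Mathlib


noncomputable section

/-- The field of rational functions in one variable over ℚ. -/
abbrev K := RatFunc ℚ

/-- The formal variable x. -/
def x : K := RatFunc.X

/-- [s]_x = 1 - x^s. -/
def br (s : ℕ) : K := 1 - x ^ s

/-- T̃ = (1+x)²/(1+x²). -/
def Tb : K := (1 + x) ^ 2 / (1 + x ^ 2)

/-- g = x(1+x²)/(1+x)⁴. -/
def g : K := x * (1 + x ^ 2) / (1 + x) ^ 4

/-- T̃_s = T̃ [s]_x [s+4]_x / ([s+1]_x [s+3]_x). -/
def Tbs (s : ℕ) : K := Tb * br s * br (s + 4) / (br (s + 1) * br (s + 3))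

/-- X̃_{s,t}. -/
def Xb (s t : ℕ) : K :=
  br 4 * br (s + 2) * br (t + 2) * br (s + t + 4) /
    (br 2 * br (s + 4) * br (t + 4) * br (s + t + 2))

/-- Ỹ_{s,t,u}. -/
def Yb (s t u : ℕ) : K :=
  br (s + 4) * br (t + 4) * br (u + 4) /
      (br 3 * br 4 * br (s + 2) * br (t + 2) * br (u + 2) *
        br (s + t + 4) * br (t + u + 4) * br (u + s + 4)) *
    (x * br 3 * br (s + 1) * br (t + 1) * br (u + 1) * br (s + t + u + 5) +
      br 1 * br (s + 3) * br (t + 3) * br (u + 3) * br (s + t + u + 3))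

lemma poly_ne (p : Polynomial ℚ) (h : p.eval 0 ≠ 0) :
    (algebraMap (Polynomial ℚ) K) p ≠ 0 := by
  apply RatFunc.algebraMap_ne_zero
  intro hc; rw [hc] at h; simp at h

lemma br_ne (n : ℕ) (h : n ≠ 0) : br n ≠ 0 := by
  have := poly_ne (1 - Polynomial.X ^ n) (by simp [zero_pow h])
  simpa [br, x, map_pow] using this

lemma one_add_x_ne : (1 : K) + x ≠ 0 := by
  have := poly_ne (1 + Polynomial.X) (by simp)
  simpa [x] using this

lemma one_add_x_sq_ne : (1 : K) + x ^ 2 ≠ 0 := by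
  have := poly_ne (1 + Polynomial.X ^ 2) (by simp)
  simpa [x, map_pow] using this

lemma br4_eq : br 4 = br 2 * (1 + x ^ 2) := by
  simp only [br]; ring

set_option maxHeartbeats 1000000 in
lemma key (s t u : ℕ) :
    br (s+4) * br (t+4) * br (u+4) *
      (x * br 3 * br (s+1) * br (t+1) * br (u+1) * br (s+t+u+5) +
        br 1 * br (s+3) * br (t+3) * br (u+3) * br (s+t+u+3))
    = br 3 * br 4 * br (s+2) * br (t+2) * br (u+2) * br (s+t+4) * br (t+u+4) * br (u+s+4)
      + x^3 * br s * br t * br u *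
        (x * br 3 * br (s+2) * br (t+2) * br (u+2) * br (s+t+u+8) +
          br 1 * br (s+4) * br (t+4) * br (u+4) * br (s+t+u+6)) := by
  simp only [br, pow_add]
  ring


set_option maxHeartbeats 4000000 in
theorem Yb_recursion (s t u : ℕ) :
    Yb s t u = 1 + g ^ 3 * Tbs s * Tbs t * Tbs u
      * Xb (s + 1) (t + 1) * Xb (s + 1) (u + 1) * Xb (t + 1) (u + 1)
      * Tbs (s + 1) * Tbs (t + 1) * Tbs (u + 1) * Yb (s + 1) (t + 1) (u + 1) := by
  have H : ∀ n : ℕ, n ≠ 0 → br n ≠ 0 := br_ne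
  have hR : g ^ 3 * Tbs s * Tbs t * Tbs u
      * Xb (s + 1) (t + 1) * Xb (s + 1) (u + 1) * Xb (t + 1) (u + 1)
      * Tbs (s + 1) * Tbs (t + 1) * Tbs (u + 1) * Yb (s + 1) (t + 1) (u + 1)
      = x ^ 3 * br s * br t * br u *
          (x * br 3 * br (s+2) * br (t+2) * br (u+2) * br (s+t+u+8) +
            br 1 * br (s+4) * br (t+4) * br (u+4) * br (s+t+u+6)) /
        (br 3 * br 4 * br (s+2) * br (t+2) * br (u+2) *
          br (s+t+4) * br (t+u+4) * br (u+s+4)) := by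
    simp only [g, Tb, Tbs, Xb, Yb]
    rw [show s+1+(t+1)+4 = s+t+6 from by omega, show s+1+(u+1)+4 = u+s+6 from by omega,
      show t+1+(u+1)+4 = t+u+6 from by omega, show u+1+(s+1)+4 = u+s+6 from by omega,
      show s+1+(t+1)+2 = s+t+4 from by omega, show s+1+(u+1)+2 = u+s+4 from by omega,
      show t+1+(u+1)+2 = t+u+4 from by omega,
      show s+1+(t+1)+(u+1)+5 = s+t+u+8 from by omega,
      show s+1+(t+1)+(u+1)+3 = s+t+u+6 from by omega,
      show s+1+4 = s+5 from by omega, show t+1+4 = t+5 from by omega,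
      show u+1+4 = u+5 from by omega,
      show s+1+3 = s+4 from by omega, show t+1+3 = t+4 from by omega,
      show u+1+3 = u+4 from by omega,
      show s+1+2 = s+3 from by omega, show t+1+2 = t+3 from by omega,
      show u+1+2 = u+3 from by omega,
      show s+1+1 = s+2 from by omega, show t+1+1 = t+2 from by omega,
      show u+1+1 = u+2 from by omega]
    simp only [div_pow, div_mul_div_comm, div_mul_eq_mul_div, mul_div_assoc', div_div]
    rw [div_eq_div_iff]
    rotate_left
    · repeat' first
        | apply mul_ne_zero
        | apply pow_ne_zero
      all_goals
        first
          | exact one_ne_zero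
          | exact one_add_x_ne
          | exact one_add_x_sq_ne
          | exact H _ (by omega)
    · repeat' first
        | apply mul_ne_zero
        | apply pow_ne_zero
      all_goals
        first
          | exact one_ne_zero
          | exact one_add_x_ne
          | exact one_add_x_sq_ne
          | exact H _ (by omega)
    rw [br4_eq]
    ring
  rw [hR, Yb]
  have hD : br 3 * br 4 * br (s+2) * br (t+2) * br (u+2) *
      br (s+t+4) * br (t+u+4) * br (u+s+4) ≠ 0 := by
    repeat' apply mul_ne_zero
    all_goals exact H _ (by omega)
  rw [div_mul_eq_mul_div, key s t u, add_div, div_self hD]
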